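/- Let X be a finite type, e : X → ℝ^T, p a pmf on X, q(x) pmf's on X, β ∈ (0,1). The minimal expected squared error min_f L(f) (with L as in the finite-type optimal denoising theorem) equals ∑_{x̃: D(x̃)>0} [ β·p(x̃)·(1−ω(x̃))²·‖e(x̃)−g⋆(x̃)‖² + (1−β)·( ∑_x p(x)·q(x)(x̃)·‖g⋆(x̃)−e(x)‖² + q̃(x̃)·ω(x̃)²·‖e(x̃)−g⋆(x̃)‖² ) ], where D(x̃) = p(x̃) + γ·q̃(x̃), γ = (1−β)/β, q̃(x̃) = ∑_x p(x)·q(x)(x̃), g⋆ the conditional mean and ω(x̃) = p(x̃)/D(x̃). -/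

import Mathlib

/-!
For each noisy point `y` the loss is a weighted least-squares problem in `f y`: the weights are
the joint probabilities of clean `x` and noisy `y`, with total mass `β · D(y)`, and their
barycenter is `f⋆(y)`, because the part of the mass coming from genuine noise has barycenter
`g⋆(y)`. The weighted least-squares identity then gives minimality, and applied once more to the
noise part alone it evaluates the minimum. Points with `D(y) = 0` carry no mass.
-/

open Finset

section WeightedLeastSquares

variable {E : Type*} [NormedAddCommGroup E] [InnerProductSpace ℝ E] {ι : Type*}

theorem sum_mul_norm_sub_sq_eq_add (s : Finset ι) (w : ι → ℝ) (a : ι → E) (v c : E)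
    (hc : (∑ i ∈ s, w i) • c = ∑ i ∈ s, w i • a i) :
    ∑ i ∈ s, w i * ‖v - a i‖ ^ 2 =
      ∑ i ∈ s, w i * ‖c - a i‖ ^ 2 + (∑ i ∈ s, w i) * ‖v - c‖ ^ 2 := by
  have h_cross : ∑ i ∈ s, w i * inner ℝ (v - c) (c - a i) = 0 := by
    simp_rw [← real_inner_smul_right, ← inner_sum, smul_sub, sum_sub_distrib, ← sum_smul, hc,
      sub_self, inner_zero_right]
  have h_split : ∀ i, w i * ‖v - a i‖ ^ 2 =
      w i * ‖c - a i‖ ^ 2 + 2 * (w i * inner ℝ (v - c) (c - a i)) +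
        w i * ‖v - c‖ ^ 2 := by
    intro i
    rw [show v - a i = (v - c) + (c - a i) by abel, norm_add_sq_real]
    ring
  simp_rw [h_split, sum_add_distrib, ← mul_sum, h_cross, ← sum_mul]
  ring

theorem sum_mul_norm_sub_sq_le (s : Finset ι) (w : ι → ℝ) (a : ι → E) (v c : E)
    (hw : 0 ≤ ∑ i ∈ s, w i) (hc : (∑ i ∈ s, w i) • c = ∑ i ∈ s, w i • a i) :
    ∑ i ∈ s, w i * ‖c - a i‖ ^ 2 ≤ ∑ i ∈ s, w i * ‖v - a i‖ ^ 2 := by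
  rw [sum_mul_norm_sub_sq_eq_add s w a v c hc]
  exact le_add_of_nonneg_right (by positivity)

end WeightedLeastSquares

section NonnegWeights

variable {M ι : Type*} [AddCommGroup M] [Module ℝ M]
variable (s : Finset ι) (w : ι → ℝ) (a : ι → M)

theorem sum_smul_eq_zero_of_sum_eq_zero (hw : ∀ i ∈ s, 0 ≤ w i) (h : ∑ i ∈ s, w i = 0) :
    ∑ i ∈ s, w i • a i = 0 :=
  sum_eq_zero fun i hi => by rw [(sum_eq_zero_iff_of_nonneg hw).mp h i hi, zero_smul]

theorem sum_smul_eq_sum_smul_of_pos_imp (c : M) (hw : ∀ i ∈ s, 0 ≤ w i)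
    (hc : 0 < ∑ i ∈ s, w i → (∑ i ∈ s, w i) • c = ∑ i ∈ s, w i • a i) :
    (∑ i ∈ s, w i) • c = ∑ i ∈ s, w i • a i := by
  rcases (sum_nonneg hw).lt_or_eq with hpos | hzero
  · exact hc hpos
  · rw [← hzero, zero_smul, sum_smul_eq_zero_of_sum_eq_zero s w a hw hzero.symm]

end NonnegWeights

section Denoising

variable {X : Type*} [DecidableEq X] (β : ℝ) (p : X → ℝ) (q : X → X → ℝ)

/-- Joint law of the clean point `x ~ p` and the noisy point `y`, which equals `x` with
probability `β` and is drawn from `q x` otherwise. -/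
def mixtureWeight (x y : X) : ℝ :=
  p x * (β * (if y = x then (1 : ℝ) else 0) + (1 - β) * q x y)

theorem mixtureWeight_nonneg {β p q} (hβ0 : 0 ≤ β) (hβ1 : β ≤ 1) (hp : ∀ x, 0 ≤ p x)
    (hq : ∀ x y, 0 ≤ q x y) (x y : X) : 0 ≤ mixtureWeight β p q x y := by
  have hδ : (0 : ℝ) ≤ if y = x then 1 else 0 := by split_ifs <;> norm_num
  exact mul_nonneg (hp x)
    (add_nonneg (mul_nonneg hβ0 hδ) (mul_nonneg (sub_nonneg.2 hβ1) (hq x y)))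

variable [Fintype X] {E : Type*} [NormedAddCommGroup E]

def denoisingLoss (e f : X → E) : ℝ :=
  ∑ x, ∑ y, mixtureWeight β p q x y * ‖f y - e x‖ ^ 2

theorem denoisingLoss_eq_sum_noisy (e f : X → E) :
    denoisingLoss β p q e f = ∑ y, ∑ x, mixtureWeight β p q x y * ‖f y - e x‖ ^ 2 :=
  sum_comm

theorem sum_mixtureWeight_smul {M : Type*} [AddCommGroup M] [Module ℝ M] (F : X → M) (y : X) :
    ∑ x, mixtureWeight β p q x y • F x =
      (β * p y) • F y + (1 - β) • ∑ x, (p x * q x y) • F x := by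
  simp_rw [mixtureWeight, mul_add, add_smul, sum_add_distrib, smul_sum, smul_smul, mul_ite,
    mul_one, mul_zero, ite_smul, zero_smul, sum_ite_eq, mem_univ, if_true]
  congr 1
  · rw [mul_comm]
  · exact sum_congr rfl fun x _ => by ring_nf

theorem sum_mixtureWeight (y : X) :
    ∑ x, mixtureWeight β p q x y = β * p y + (1 - β) * ∑ x, p x * q x y := by
  simpa only [smul_eq_mul, mul_one] using sum_mixtureWeight_smul β p q (fun _ => (1 : ℝ)) y

theorem sum_mixtureWeight_mul_norm_sub_sq [InnerProductSpace ℝ E] (e : X → E) (y : X) (g : E)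
    (ω : ℝ)
    (hg : (∑ x, p x * q x y) • g = ∑ x, (p x * q x y) • e x) :
    ∑ x, mixtureWeight β p q x y * ‖ω • e y + (1 - ω) • g - e x‖ ^ 2 =
      β * p y * (1 - ω) ^ 2 * ‖e y - g‖ ^ 2 +
        (1 - β) * (∑ x, p x * q x y * ‖g - e x‖ ^ 2 +
          (∑ x, p x * q x y) * ω ^ 2 * ‖e y - g‖ ^ 2) := by
  have h_mix := sum_mixtureWeight_smul β p q (‖ω • e y + (1 - ω) • g - e ·‖ ^ 2) y
  simp only [smul_eq_mul] at h_mix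
  rw [h_mix, sum_mul_norm_sub_sq_eq_add univ _ e _ g hg]
  have h_left : ω • e y + (1 - ω) • g - e y = (1 - ω) • (g - e y) := by module
  have h_right : ω • e y + (1 - ω) • g - g = ω • (e y - g) := by module
  rw [h_left, h_right, norm_smul, norm_smul, mul_pow, mul_pow, Real.norm_eq_abs,
    Real.norm_eq_abs, sq_abs, sq_abs, norm_sub_rev g (e y)]
  ring

variable {β p q} {e : X → E}

theorem denoisingLoss_eq_sum_filter (f : X → E) (P : X → Prop) [DecidablePred P]
    (hW : ∀ x y, 0 ≤ mixtureWeight β p q x y)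
    (hP : ∀ y, ¬ P y → ∑ x, mixtureWeight β p q x y = 0) :
    denoisingLoss β p q e f =
      ∑ y ∈ univ.filter P, ∑ x, mixtureWeight β p q x y * ‖f y - e x‖ ^ 2 := by
  rw [denoisingLoss_eq_sum_noisy, sum_filter]
  refine sum_congr rfl fun y _ => ?_
  split_ifs with hy
  · rfl
  · simpa only [smul_eq_mul] using sum_smul_eq_zero_of_sum_eq_zero univ _
      (fun x => ‖f y - e x‖ ^ 2) (fun x _ => hW x y) (hP y hy)

theorem denoisingLoss_le [InnerProductSpace ℝ E] (fstar f : X → E)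
    (hW : ∀ y, 0 ≤ ∑ x, mixtureWeight β p q x y)
    (hfstar : ∀ y, (∑ x, mixtureWeight β p q x y) • fstar y =
      ∑ x, mixtureWeight β p q x y • e x) :
    denoisingLoss β p q e fstar ≤ denoisingLoss β p q e f := by
  rw [denoisingLoss_eq_sum_noisy, denoisingLoss_eq_sum_noisy]
  exact sum_le_sum fun y _ => sum_mul_norm_sub_sq_le _ _ _ _ _ (hW y) (hfstar y)

end Denoising

theorem optimal_denoiser_value_general
    {X : Type*} [Fintype X] [DecidableEq X] {T : ℕ} (e : X → EuclideanSpace ℝ (Fin T))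
    (β : ℝ) (hβ : β ∈ Set.Ioo (0 : ℝ) 1)
    (p : X → ℝ) (hp : ∀ x, 0 ≤ p x)
    (q : X → X → ℝ) (hq : ∀ x y, 0 ≤ q x y)
    (γ : ℝ) (hγ : γ = (1 - β) / β)
    (qt : X → ℝ) (hqt : ∀ y, qt y = ∑ x, p x * q x y)
    (g : X → EuclideanSpace ℝ (Fin T))
    (hg : ∀ y, 0 < qt y → g y = (qt y)⁻¹ • ∑ x, (p x * q x y) • e x)
    (ω : X → ℝ) (hω : ∀ y, ω y = p y / (p y + γ * qt y))
    (fstar : X → EuclideanSpace ℝ (Fin T))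
    (hfstar : ∀ y, 0 < p y + γ * qt y →
        fstar y = ω y • e y + (1 - ω y) • g y) :
    (∀ f : X → EuclideanSpace ℝ (Fin T),
      (∑ x, ∑ y, p x * (β * (if y = x then (1 : ℝ) else 0) + (1 - β) * q x y) *
          ‖fstar y - e x‖ ^ 2) ≤
      (∑ x, ∑ y, p x * (β * (if y = x then (1 : ℝ) else 0) + (1 - β) * q x y) *
          ‖f y - e x‖ ^ 2)) ∧
    (∑ x, ∑ y, p x * (β * (if y = x then (1 : ℝ) else 0) + (1 - β) * q x y) *
        ‖fstar y - e x‖ ^ 2) =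
      ∑ y ∈ Finset.univ.filter (fun y => 0 < p y + γ * qt y),
        (β * p y * (1 - ω y) ^ 2 * ‖e y - g y‖ ^ 2 +
          (1 - β) * ((∑ x, p x * q x y * ‖g y - e x‖ ^ 2) +
            qt y * (ω y) ^ 2 * ‖e y - g y‖ ^ 2)) := by
  obtain ⟨hβ0, hβ1⟩ := hβ
  have hβγ : β * γ = 1 - β := by rw [hγ]; field_simp
  have hW0 := mixtureWeight_nonneg hβ0.le hβ1.le hp hq
  have hW_sum : ∀ y, ∑ x, mixtureWeight β p q x y = β * (p y + γ * qt y) := fun y => by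
    rw [sum_mixtureWeight, ← hqt, ← hβγ]
    ring
  have hD0 : ∀ y, 0 ≤ p y + γ * qt y := fun y =>
    nonneg_of_mul_nonneg_right (hW_sum y ▸ sum_nonneg fun x _ => hW0 x y) hβ0
  have hg_bary : ∀ y, qt y • g y = ∑ x, (p x * q x y) • e x := fun y => by
    simp only [hqt] at hg ⊢
    exact sum_smul_eq_sum_smul_of_pos_imp _ _ _ _ (fun x _ => mul_nonneg (hp x) (hq x y))
      fun hpos => by rw [hg y hpos, smul_inv_smul₀ hpos.ne']
  have hfstar_bary : ∀ y, (∑ x, mixtureWeight β p q x y) • fstar y =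
      ∑ x, mixtureWeight β p q x y • e x := fun y =>
    sum_smul_eq_sum_smul_of_pos_imp _ _ _ _ (fun x _ => hW0 x y) fun hpos => by
      have hD : 0 < p y + γ * qt y := pos_of_mul_pos_right (hW_sum y ▸ hpos) hβ0.le
      rw [hW_sum, sum_mixtureWeight_smul, ← hg_bary, hfstar y hD, hω, smul_add, smul_smul,
        smul_smul, smul_smul, ← hβγ]
      congr 2 <;> field_simp
      ring
  change (∀ f, denoisingLoss β p q e fstar ≤ denoisingLoss β p q e f) ∧
    denoisingLoss β p q e fstar = _
  refine ⟨fun f => denoisingLoss_le fstar f (fun y => sum_nonneg fun x _ => hW0 x y)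
    hfstar_bary, ?_⟩
  rw [denoisingLoss_eq_sum_filter fstar _ hW0 fun y hD => by
    rw [hW_sum, (not_lt.mp hD).antisymm (hD0 y), mul_zero]]
  refine sum_congr rfl fun y hy => ?_
  rw [hfstar y (mem_filter.mp hy).2, hqt y]
  exact sum_mixtureWeight_mul_norm_sub_sq β p q e y (g y) (ω y) (hqt y ▸ hg_bary y)

/-- Closed form of the minimal expected squared error of the optimal denoiser:
the minimum of `L` is attained by `f⋆(y) = ω(y) • e(y) + (1-ω(y)) • g⋆(y)` and
equals the stated sum over the noisy points `y` with `D(y) = p(y) + γ·qt(y) > 0`. -/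
theorem optimal_denoiser_value
    {X : Type*} [Fintype X] [DecidableEq X] {T : ℕ} (e : X → EuclideanSpace ℝ (Fin T))
    (β : ℝ) (hβ : β ∈ Set.Ioo (0 : ℝ) 1)
    (p : X → ℝ) (hp : ∀ x, 0 ≤ p x) (hp1 : ∑ x, p x = 1)
    (q : X → X → ℝ) (hq : ∀ x y, 0 ≤ q x y) (hq1 : ∀ x, ∑ y, q x y = 1)
    (γ : ℝ) (hγ : γ = (1 - β) / β)
    (qt : X → ℝ) (hqt : ∀ y, qt y = ∑ x, p x * q x y)
    (g : X → EuclideanSpace ℝ (Fin T))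
    (hg : ∀ y, 0 < qt y → g y = (qt y)⁻¹ • ∑ x, (p x * q x y) • e x)
    (ω : X → ℝ) (hω : ∀ y, ω y = p y / (p y + γ * qt y))
    (fstar : X → EuclideanSpace ℝ (Fin T))
    (hfstar : ∀ y, 0 < p y + γ * qt y →
        fstar y = ω y • e y + (1 - ω y) • g y) :
    (∀ f : X → EuclideanSpace ℝ (Fin T),
      (∑ x, ∑ y, p x * (β * (if y = x then (1 : ℝ) else 0) + (1 - β) * q x y) *
          ‖fstar y - e x‖ ^ 2) ≤
      (∑ x, ∑ y, p x * (β * (if y = x then (1 : ℝ) else 0) + (1 - β) * q x y) *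
          ‖f y - e x‖ ^ 2)) ∧
    (∑ x, ∑ y, p x * (β * (if y = x then (1 : ℝ) else 0) + (1 - β) * q x y) *
        ‖fstar y - e x‖ ^ 2) =
      ∑ y ∈ Finset.univ.filter (fun y => 0 < p y + γ * qt y),
        (β * p y * (1 - ω y) ^ 2 * ‖e y - g y‖ ^ 2 +
          (1 - β) * ((∑ x, p x * q x y * ‖g y - e x‖ ^ 2) +
            qt y * (ω y) ^ 2 * ‖e y - g y‖ ^ 2)) :=
  optimal_denoiser_value_general e β hβ p hp q hq γ hγ qt hqt g hg ω hω fstar hfstar
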